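/- arXiv:1510.07255 — 5 statements merged into one kernel-verified Lean document; each statement's English description precedes it below -/
import Mathlib

section
/- Given a characteristic-2 Lie superalgebra datum (g, g₀, g₁, [·,·], sq) over K, every K-submodule h ⊆ g that is closed under the bracket (i.e. [h,h] ⊆ h), even if h is not homogeneous (h need not equal (h ∩ g₀) ⊕ (h ∩ g₁)), is itself a Lie algebra over K under the restricted bracket. (This is the statement that for p = 2 Volichenko algebras are actually Lie algebras.) -/
/-!
The bracket is alternating and satisfies the Jacobi identity on all of `g`. For odd `x`,
`[x, x] = sq (2x) + 2 sq x = 0`. For a symmetric bracket in characteristic 2, the Jacobi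
identity at `(x, y, z)` is the Leibniz rule `[[x, y], z] = [x, [y, z]] + [y, [x, z]]`, which is
therefore invariant under all permutations of `x, y, z` and additive in each of them. It thus
suffices to check it on homogeneous triples, two of whose entries have the same parity: two even
entries are handled by the Jacobi identity on `g₀` or by axiom (iii), two odd ones by polarizing
axiom (vi).
-/

/-- A characteristic-2 Lie superalgebra datum over a commutative ring `K` (with `2 = 0` in `K`):
a `K`-module `g` with submodules `g₀`, `g₁` forming an internal direct sum decomposition,
a `K`-bilinear bracket respecting the `ℤ/2`-grading, and a squaring map `sq : g₁ → g₀`,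
subject to axioms (i)–(vi). -/
structure Char2LieSuperDatum (K : Type*) (M : Type*) [CommRing K] [AddCommGroup M]
    [Module K M] where
  /-- the even part -/
  g0 : Submodule K M
  /-- the odd part -/
  g1 : Submodule K M
  /-- `g` is the internal direct sum `g₀ ⊕ g₁` -/
  directSum : IsCompl g0 g1
  /-- the `K`-bilinear bracket -/
  br : M →ₗ[K] M →ₗ[K] M
  br_mem_00 : ∀ x ∈ g0, ∀ y ∈ g0, br x y ∈ g0
  br_mem_01 : ∀ x ∈ g0, ∀ y ∈ g1, br x y ∈ g1
  br_mem_11 : ∀ x ∈ g1, ∀ y ∈ g1, br x y ∈ g0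
  /-- the squaring map on the odd part, with values in the even part -/
  sq : g1 → M
  sq_mem : ∀ x : g1, sq x ∈ g0
  /-- (i) the bracket is alternating on `g₀` -/
  br_self_even : ∀ x ∈ g0, br x x = 0
  /-- (i) the Jacobi identity holds on `g₀`, so `(g₀, [·,·])` is a Lie algebra over `K` -/
  jacobi_even : ∀ x ∈ g0, ∀ y ∈ g0, ∀ z ∈ g0,
      br x (br y z) + br y (br z x) + br z (br x y) = 0
  /-- (ii) the bracket is symmetric -/
  br_comm : ∀ x y : M, br x y = br y x
  /-- (iii) `g₁` is a `g₀`-module -/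
  br_action : ∀ x ∈ g0, ∀ y ∈ g0, ∀ z ∈ g1,
      br (br x y) z = br x (br y z) + br y (br x z)
  /-- (iv) the squaring is quadratic -/
  sq_smul : ∀ (a : K) (x : g1), sq (a • x) = (a * a) • sq x
  /-- (v) the bracket on `g₁` is the polarization of the squaring -/
  br_polar : ∀ x y : g1, br (x : M) (y : M) = sq (x + y) + sq x + sq y
  /-- (vi) `[sq x, y] = [x, [x, y]]` -/
  br_sq : ∀ (x : g1) (y : M), br (sq x) y = br (x : M) (br (x : M) y)

namespace Char2LieSuperDatum

variable {K M : Type*} [CommRing K] [AddCommGroup M] [Module K M] (D : Char2LieSuperDatum K M)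

theorem mem_g0_sup_g1 (m : M) : m ∈ D.g0 ⊔ D.g1 :=
  D.directSum.sup_eq_top ▸ Submodule.mem_top

@[elab_as_elim]
theorem induction_on {p : M → Prop} (m : M) (even : ∀ x ∈ D.g0, p x)
    (odd : ∀ x ∈ D.g1, p x) (add : ∀ x y, p x → p y → p (x + y)) : p m := by
  obtain ⟨x, hx, y, hy, rfl⟩ := Submodule.mem_sup.mp (D.mem_g0_sup_g1 m)
  exact add x y (even x hx) (odd y hy)

theorem br_self_of_mem_g1 (htwo : (2 : K) = 0) {x : M} (hx : x ∈ D.g1) : D.br x x = 0 := by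
  lift x to D.g1 using hx
  have hsq : D.sq (x + x) = 0 := by
    rw [← two_smul K x, htwo, D.sq_smul, zero_mul, zero_smul]
  linear_combination (norm := module) D.br_polar x x + hsq + htwo • D.sq x

theorem br_self (htwo : (2 : K) = 0) (m : M) : D.br m m = 0 := by
  obtain ⟨x, hx, y, hy, rfl⟩ := Submodule.mem_sup.mp (D.mem_g0_sup_g1 m)
  have hxx := D.br_self_even x hx
  have hyy := D.br_self_of_mem_g1 htwo hy
  simp only [map_add, LinearMap.add_apply, D.br_comm y x]
  linear_combination (norm := module) hxx + hyy + htwo • D.br x y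

def Leibniz (x y z : M) : Prop :=
  D.br (D.br x y) z = D.br x (D.br y z) + D.br y (D.br x z)

theorem leibniz_iff_jacobi (htwo : (2 : K) = 0) (x y z : M) :
    D.Leibniz x y z ↔ D.br x (D.br y z) + D.br y (D.br z x) + D.br z (D.br x y) = 0 := by
  rw [Leibniz, D.br_comm (D.br x y) z, D.br_comm x z]
  constructor <;> intro h
  · linear_combination (norm := module) h + htwo • (D.br x (D.br y z) + D.br y (D.br z x))
  · linear_combination (norm := module) h - htwo • (D.br x (D.br y z) + D.br y (D.br z x))

variable {D}

theorem Leibniz.symm {x y z : M} (h : D.Leibniz x y z) : D.Leibniz y x z := by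
  rw [Leibniz, D.br_comm y x, h, add_comm]

theorem Leibniz.rotate (htwo : (2 : K) = 0) {x y z : M} (h : D.Leibniz x y z) :
    D.Leibniz y z x := by
  rw [D.leibniz_iff_jacobi htwo] at h ⊢
  rw [← h]
  abel

theorem Leibniz.add_left {x x' y z : M} (h : D.Leibniz x y z) (h' : D.Leibniz x' y z) :
    D.Leibniz (x + x') y z := by
  simp only [Leibniz, map_add, LinearMap.add_apply] at h h' ⊢
  rw [h, h']
  abel

theorem Leibniz.add_middle {x y y' z : M} (h : D.Leibniz x y z) (h' : D.Leibniz x y' z) :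
    D.Leibniz x (y + y') z :=
  (h.symm.add_left h'.symm).symm

theorem Leibniz.add_right {x y z z' : M} (h : D.Leibniz x y z) (h' : D.Leibniz x y z') :
    D.Leibniz x y (z + z') := by
  simp only [Leibniz, map_add] at h h' ⊢
  rw [h, h']
  abel

variable (D)

theorem leibniz_of_mem_g1 (htwo : (2 : K) = 0) {x y : M} (hx : x ∈ D.g1) (hy : y ∈ D.g1)
    (z : M) : D.Leibniz x y z := by
  lift x to D.g1 using hx
  lift y to D.g1 using hy
  have hpolar :
      D.br (D.br x y) z = D.br (D.sq (x + y)) z + D.br (D.sq x) z + D.br (D.sq y) z := by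
    rw [D.br_polar, map_add, map_add, LinearMap.add_apply, LinearMap.add_apply]
  have hsum := D.br_sq (x + y) z
  simp only [Submodule.coe_add, map_add, LinearMap.add_apply] at hsum
  rw [Leibniz]
  linear_combination (norm := module) hpolar + hsum + D.br_sq x z + D.br_sq y z +
    htwo • (D.br x (D.br x z) + D.br y (D.br y z))

theorem leibniz_of_mem_g0 (htwo : (2 : K) = 0) {x y : M} (hx : x ∈ D.g0) (hy : y ∈ D.g0)
    (z : M) : D.Leibniz x y z := by
  refine D.induction_on z (fun z hz => ?_) (fun z hz => D.br_action x hx y hy z hz)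
    (fun _ _ => Leibniz.add_right)
  exact (D.leibniz_iff_jacobi htwo x y z).mpr (D.jacobi_even x hx y hy z hz)

theorem leibniz_of_mem_g0_of_mem_g1 (htwo : (2 : K) = 0) {x y : M} (hx : x ∈ D.g0)
    (hy : y ∈ D.g1) (z : M) : D.Leibniz x y z := by
  refine D.induction_on z (fun z hz => ?_) (fun z hz => ?_) (fun _ _ => Leibniz.add_right)
  · exact (D.leibniz_of_mem_g0 htwo hz hx y).rotate htwo
  · exact ((D.leibniz_of_mem_g1 htwo hy hz x).rotate htwo).rotate htwo

theorem leibniz (htwo : (2 : K) = 0) (x y z : M) : D.Leibniz x y z := by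
  refine D.induction_on x (fun x hx => ?_) (fun x hx => ?_) (fun _ _ => Leibniz.add_left)
  all_goals
    refine D.induction_on y (fun y hy => ?_) (fun y hy => ?_) (fun _ _ => Leibniz.add_middle)
  · exact D.leibniz_of_mem_g0 htwo hx hy z
  · exact D.leibniz_of_mem_g0_of_mem_g1 htwo hx hy z
  · exact (D.leibniz_of_mem_g0_of_mem_g1 htwo hy hx z).symm
  · exact D.leibniz_of_mem_g1 htwo hx hy z

theorem jacobi (htwo : (2 : K) = 0) (x y z : M) :
    D.br x (D.br y z) + D.br y (D.br z x) + D.br z (D.br x y) = 0 :=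
  (D.leibniz_iff_jacobi htwo x y z).mp (D.leibniz htwo x y z)

end Char2LieSuperDatum

theorem char2Volichenko_isLieAlgebra_general {K M : Type*} [CommRing K] [AddCommGroup M]
    [Module K M] (htwo : (2 : K) = 0) (D : Char2LieSuperDatum K M)
    (h : Submodule K M) :
    (∀ x ∈ h, D.br x x = 0) ∧
    (∀ x ∈ h, ∀ y ∈ h, ∀ z ∈ h,
      D.br x (D.br y z) + D.br y (D.br z x) + D.br z (D.br x y) = 0) :=
  ⟨fun x _ => D.br_self htwo x, fun x _ y _ z _ => D.jacobi htwo x y z⟩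

/-- For `p = 2`, Volichenko algebras are actually Lie algebras: any `K`-submodule `h` of `g`
that is closed under the bracket (possibly inhomogeneous, i.e. `h` need not equal
`(h ⊓ g₀) ⊔ (h ⊓ g₁)`) is a Lie algebra over `K` under the restricted bracket. -/
theorem char2Volichenko_isLieAlgebra {K M : Type*} [CommRing K] [AddCommGroup M]
    [Module K M] (htwo : (2 : K) = 0) (D : Char2LieSuperDatum K M)
    (h : Submodule K M) (hclosed : ∀ x ∈ h, ∀ y ∈ h, D.br x y ∈ h) :
    (∀ x ∈ h, D.br x x = 0) ∧
    (∀ x ∈ h, ∀ y ∈ h, ∀ z ∈ h,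
      D.br x (D.br y z) + D.br y (D.br z x) + D.br z (D.br x y) = 0) :=
  char2Volichenko_isLieAlgebra_general htwo D h
end

section
/- The derived subalgebra [aut(Π_{2n}), aut(Π_{2n})] (the K-linear span of all commutators of elements of aut(Π_{2n})) equals the set of block matrices [[A, B],[C, Aᵗ]] with A ∈ M_n(K) arbitrary and B, C symmetric n×n matrices with zero diagonal. -/
/-!
In characteristic 2, `aut(Π_{2n})` consists of the block matrices `[[A, B], [C, Aᵀ]]` with `B` and
`C` symmetric. Multiplying out, the off-diagonal blocks of a commutator of two such matrices are
sums of matrices `M + Mᵀ`, which are symmetric with zero diagonal because `2 = 0`, and its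
diagonal blocks are `P` and `Pᵀ`. Conversely, a ZD matrix is `N + Nᵀ` with `N` its strictly upper
triangular part, and this is the off-diagonal block of the commutator of `[[N, 0], [0, Nᵀ]]` with
`[[0, 1], [0, 0]]` (or `[[0, 0], [1, 0]]`). For symmetric `B`, `C` the commutator of
`[[0, B], [0, 0]]` and `[[0, 0], [C, 0]]` is `[[BC, 0], [0, (BC)ᵀ]]`, and every matrix unit is
such a product: `Eᵢⱼ = Eᵢᵢ (Eᵢⱼ + Eⱼᵢ)` for `i ≠ j` and `Eᵢᵢ = Eᵢᵢ Eᵢᵢ`.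
-/

open Matrix

/-- The Gram matrix `Π_{2n}`, in `n × n` blocks `[[0, 1ₙ], [1ₙ, 0]]`. -/
noncomputable def PiGram (K : Type*) [Field K] (n : ℕ) :
    Matrix (Fin n ⊕ Fin n) (Fin n ⊕ Fin n) K :=
  Matrix.fromBlocks 0 1 1 0

/-- The Lie algebra `aut(Π_{2n}) = {X : Xᵀ J + J X = 0}`, as a set of matrices. -/
def autPiSet (K : Type*) [Field K] (n : ℕ) :
    Set (Matrix (Fin n ⊕ Fin n) (Fin n ⊕ Fin n) K) :=
  {X | Xᵀ * PiGram K n + PiGram K n * X = 0}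

namespace Matrix

variable {R m : Type*}

lemma neg_eq_of_charTwo {n : Type*} [Ring R] [CharP R 2] (M : Matrix m n R) : -M = M := by
  ext i j
  exact CharTwo.neg_eq _

variable (R m) in
def symmZeroDiag [Semiring R] : Submodule R (Matrix m m R) where
  carrier := {B | B.IsSymm ∧ ∀ i, B i i = 0}
  add_mem' hB hC := ⟨hB.1.add hC.1, fun i => by simp [hB.2 i, hC.2 i]⟩
  zero_mem' := ⟨isSymm_zero, fun _ => rfl⟩
  smul_mem' c _ hB := ⟨hB.1.smul c, fun i => by simp [hB.2 i]⟩

lemma mem_symmZeroDiag [Semiring R] {B : Matrix m m R} :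
    B ∈ symmZeroDiag R m ↔ B.IsSymm ∧ ∀ i, B i i = 0 :=
  Iff.rfl

lemma add_transpose_mem_symmZeroDiag [Ring R] [CharP R 2] (M : Matrix m m R) :
    M + Mᵀ ∈ symmZeroDiag R m :=
  ⟨isSymm_add_transpose_self M, fun i => CharTwo.add_self_eq_zero (M i i)⟩

lemma exists_add_transpose_eq_of_mem_symmZeroDiag [LinearOrder m] [Semiring R]
    {B : Matrix m m R} (hB : B ∈ symmZeroDiag R m) : ∃ N : Matrix m m R, N + Nᵀ = B := by
  refine ⟨of fun i j => if i < j then B i j else 0, ?_⟩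
  ext i j
  rcases lt_trichotomy i j with h | rfl | h
  · simp [h, h.not_gt]
  · simp [hB.2 i]
  · simp [h, h.not_gt, hB.1.apply j i]

lemma exists_isSymm_mul_eq_single [Fintype m] [DecidableEq m] [Semiring R] (i j : m) (x : R) :
    ∃ B C : Matrix m m R, B.IsSymm ∧ C.IsSymm ∧ B * C = single i j x := by
  by_cases hij : i = j
  · subst hij
    exact ⟨single i i x, single i i 1, by simp [IsSymm, transpose_single],
      by simp [IsSymm, transpose_single], by simp⟩
  · exact ⟨single i i x, single i j 1 + single j i 1, by simp [IsSymm, transpose_single],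
      by simp [IsSymm, transpose_single, add_comm], by simp [mul_add, hij]⟩

variable (R m) in
def symmZeroDiagBlocks [Semiring R] : Submodule R (Matrix (m ⊕ m) (m ⊕ m) R) where
  carrier := {Z | ∃ A B C : Matrix m m R,
    B ∈ symmZeroDiag R m ∧ C ∈ symmZeroDiag R m ∧ Z = fromBlocks A B C Aᵀ}
  add_mem' := by
    rintro _ _ ⟨A, B, C, hB, hC, rfl⟩ ⟨A', B', C', hB', hC', rfl⟩
    exact ⟨A + A', B + B', C + C', add_mem hB hB', add_mem hC hC', by
      simp [fromBlocks_add, transpose_add]⟩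
  zero_mem' := ⟨0, 0, 0, zero_mem _, zero_mem _, by simp⟩
  smul_mem' := by
    rintro c _ ⟨A, B, C, hB, hC, rfl⟩
    exact ⟨c • A, c • B, c • C, Submodule.smul_mem _ c hB, Submodule.smul_mem _ c hC, by
      simp [fromBlocks_smul, transpose_smul]⟩

end Matrix

section autPi

variable {K : Type*} [Field K] {n : ℕ}

lemma fromBlocks_mem_autPiSet_iff {A B C D : Matrix (Fin n) (Fin n) K} :
    fromBlocks A B C D ∈ autPiSet K n ↔ Bᵀ = -B ∧ Cᵀ = -C ∧ D = -Aᵀ := by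
  simp only [autPiSet, Set.mem_ofPred_eq, PiGram, fromBlocks_transpose, fromBlocks_multiply,
    Matrix.mul_zero, Matrix.mul_one, Matrix.zero_mul, Matrix.one_mul, zero_add, add_zero,
    fromBlocks_add, ← fromBlocks_zero, fromBlocks_inj, ← eq_neg_iff_add_eq_zero]
  constructor
  · rintro ⟨hC, hAD, -, hB⟩
    exact ⟨hB, hC, by rw [hAD, neg_neg]⟩
  · rintro ⟨hB, hC, rfl⟩
    exact ⟨hC, (neg_neg _).symm, by rw [transpose_neg, transpose_transpose], hB⟩

variable (K n) in
def autPiDerived : Submodule K (Matrix (Fin n ⊕ Fin n) (Fin n ⊕ Fin n) K) :=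
  Submodule.span K {Z | ∃ X ∈ autPiSet K n, ∃ Y ∈ autPiSet K n, Z = X * Y - Y * X}

lemma commutator_mem_autPiDerived {X Y : Matrix (Fin n ⊕ Fin n) (Fin n ⊕ Fin n) K}
    (hX : X ∈ autPiSet K n) (hY : Y ∈ autPiSet K n) : X * Y - Y * X ∈ autPiDerived K n :=
  Submodule.subset_span ⟨X, hX, Y, hY, rfl⟩

variable [CharP K 2]

lemma mem_autPiSet_iff_of_charTwo {X : Matrix (Fin n ⊕ Fin n) (Fin n ⊕ Fin n) K} :
    X ∈ autPiSet K n ↔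
      ∃ A B C : Matrix (Fin n) (Fin n) K, B.IsSymm ∧ C.IsSymm ∧ X = fromBlocks A B C Aᵀ := by
  constructor
  · intro hX
    rw [← fromBlocks_toBlocks X, fromBlocks_mem_autPiSet_iff] at hX
    simp only [neg_eq_of_charTwo] at hX
    obtain ⟨hB, hC, hD⟩ := hX
    exact ⟨_, _, _, hB, hC, by rw [← hD, fromBlocks_toBlocks]⟩
  · rintro ⟨A, B, C, hB, hC, rfl⟩
    simp only [fromBlocks_mem_autPiSet_iff, neg_eq_of_charTwo]
    exact ⟨hB, hC, trivial⟩

lemma commutator_mem_symmZeroDiagBlocks {X Y : Matrix (Fin n ⊕ Fin n) (Fin n ⊕ Fin n) K}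
    (hX : X ∈ autPiSet K n) (hY : Y ∈ autPiSet K n) :
    X * Y - Y * X ∈ symmZeroDiagBlocks K (Fin n) := by
  obtain ⟨A, B, C, hB, hC, rfl⟩ := mem_autPiSet_iff_of_charTwo.1 hX
  obtain ⟨A', B', C', hB', hC', rfl⟩ := mem_autPiSet_iff_of_charTwo.1 hY
  refine ⟨A * A' + B * C' + (A' * A + B' * C),
    A * B' + (A * B')ᵀ + (A' * B + (A' * B)ᵀ), Aᵀ * C' + (Aᵀ * C')ᵀ + (A'ᵀ * C + (A'ᵀ * C)ᵀ),
    add_mem (add_transpose_mem_symmZeroDiag _) (add_transpose_mem_symmZeroDiag _),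
    add_mem (add_transpose_mem_symmZeroDiag _) (add_transpose_mem_symmZeroDiag _), ?_⟩
  rw [sub_eq_add_neg, neg_eq_of_charTwo]
  simp only [fromBlocks_multiply, fromBlocks_add, fromBlocks_inj, transpose_add, transpose_mul,
    transpose_transpose, hB.eq, hC.eq, hB'.eq, hC'.eq]
  exact ⟨trivial, by abel, by abel, by abel⟩

lemma fromBlocks_mem_autPiSet_of_isSymm {A B C : Matrix (Fin n) (Fin n) K}
    (hB : B.IsSymm) (hC : C.IsSymm) : fromBlocks A B C Aᵀ ∈ autPiSet K n :=
  mem_autPiSet_iff_of_charTwo.2 ⟨A, B, C, hB, hC, rfl⟩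

lemma fromBlocks₁₂_mem_autPiDerived {B : Matrix (Fin n) (Fin n) K}
    (hB : B ∈ symmZeroDiag K (Fin n)) : fromBlocks 0 B 0 0 ∈ autPiDerived K n := by
  obtain ⟨N, rfl⟩ := exists_add_transpose_eq_of_mem_symmZeroDiag hB
  convert commutator_mem_autPiDerived (fromBlocks_mem_autPiSet_of_isSymm (A := N) isSymm_zero
    isSymm_zero) (fromBlocks_mem_autPiSet_of_isSymm (A := 0) isSymm_one isSymm_zero) using 1
  rw [sub_eq_add_neg, neg_eq_of_charTwo]
  simp [fromBlocks_multiply, fromBlocks_add]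

lemma fromBlocks₂₁_mem_autPiDerived {C : Matrix (Fin n) (Fin n) K}
    (hC : C ∈ symmZeroDiag K (Fin n)) : fromBlocks 0 0 C 0 ∈ autPiDerived K n := by
  obtain ⟨N, rfl⟩ := exists_add_transpose_eq_of_mem_symmZeroDiag hC
  convert commutator_mem_autPiDerived (fromBlocks_mem_autPiSet_of_isSymm (A := N) isSymm_zero
    isSymm_zero) (fromBlocks_mem_autPiSet_of_isSymm (A := 0) isSymm_zero isSymm_one) using 1
  rw [sub_eq_add_neg, neg_eq_of_charTwo]
  simp [fromBlocks_multiply, fromBlocks_add, add_comm]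

lemma fromBlocks_mul_mem_autPiDerived {B C : Matrix (Fin n) (Fin n) K}
    (hB : B.IsSymm) (hC : C.IsSymm) : fromBlocks (B * C) 0 0 (B * C)ᵀ ∈ autPiDerived K n := by
  convert commutator_mem_autPiDerived (fromBlocks_mem_autPiSet_of_isSymm (A := 0) hB
    isSymm_zero) (fromBlocks_mem_autPiSet_of_isSymm (A := 0) isSymm_zero hC) using 1
  rw [sub_eq_add_neg, neg_eq_of_charTwo]
  simp [fromBlocks_multiply, fromBlocks_add, hB.eq, hC.eq]

lemma fromBlocks_diag_transpose_mem_autPiDerived (A : Matrix (Fin n) (Fin n) K) :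
    fromBlocks A 0 0 Aᵀ ∈ autPiDerived K n := by
  induction A using Matrix.induction_on' with
  | h_zero => simp [zero_mem]
  | h_add P Q hP hQ => simpa [fromBlocks_add] using add_mem hP hQ
  | h_std_basis i j x =>
    obtain ⟨B, C, hB, hC, hBC⟩ := exists_isSymm_mul_eq_single i j x
    exact hBC ▸ fromBlocks_mul_mem_autPiDerived hB hC

lemma symmZeroDiagBlocks_le_autPiDerived : symmZeroDiagBlocks K (Fin n) ≤ autPiDerived K n := by
  rintro _ ⟨A, B, C, hB, hC, rfl⟩
  have hsplit : fromBlocks A B C Aᵀ =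
      fromBlocks A 0 0 Aᵀ + fromBlocks 0 B 0 0 + fromBlocks 0 0 C 0 := by
    simp [fromBlocks_add]
  rw [hsplit]
  exact add_mem (add_mem (fromBlocks_diag_transpose_mem_autPiDerived A)
    (fromBlocks₁₂_mem_autPiDerived hB)) (fromBlocks₂₁_mem_autPiDerived hC)

lemma autPiDerived_eq_symmZeroDiagBlocks : autPiDerived K n = symmZeroDiagBlocks K (Fin n) :=
  le_antisymm (Submodule.span_le.2 <| by
      rintro _ ⟨X, hX, Y, hY, rfl⟩
      exact commutator_mem_symmZeroDiagBlocks hX hY)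
    symmZeroDiagBlocks_le_autPiDerived

end autPi

theorem derived_autPi_eq_blocks_general {K : Type*} [Field K] [CharP K 2] {n : ℕ} :
    (Submodule.span K
        {Z : Matrix (Fin n ⊕ Fin n) (Fin n ⊕ Fin n) K |
          ∃ X ∈ autPiSet K n, ∃ Y ∈ autPiSet K n, Z = X * Y - Y * X} : Set _) =
      {Z | ∃ A B C : Matrix (Fin n) (Fin n) K,
          B.IsSymm ∧ (∀ i, B i i = 0) ∧ C.IsSymm ∧ (∀ i, C i i = 0) ∧
          Z = Matrix.fromBlocks A B C Aᵀ} := by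
  change SetLike.coe (autPiDerived K n) = _
  rw [autPiDerived_eq_symmZeroDiagBlocks]
  ext Z
  exact exists₃_congr fun _ _ _ => by simp only [mem_symmZeroDiag, and_assoc]

/-- For `p = 2`, the derived subalgebra `[aut(Π_{2n}), aut(Π_{2n})]` (the `K`-linear span of
all commutators of elements of `aut(Π_{2n})`) consists exactly of the block matrices
`[[A, B], [C, Aᵀ]]` with `A` arbitrary and `B`, `C` symmetric with zero diagonal. -/
theorem derived_autPi_eq_blocks {K : Type*} [Field K] [CharP K 2] {n : ℕ} (hn : 1 ≤ n) :
    (Submodule.span K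
        {Z : Matrix (Fin n ⊕ Fin n) (Fin n ⊕ Fin n) K |
          ∃ X ∈ autPiSet K n, ∃ Y ∈ autPiSet K n, Z = X * Y - Y * X} : Set _) =
      {Z | ∃ A B C : Matrix (Fin n) (Fin n) K,
          B.IsSymm ∧ (∀ i, B i i = 0) ∧ C.IsSymm ∧ (∀ i, C i i = 0) ∧
          Z = Matrix.fromBlocks A B C Aᵀ} :=
  derived_autPi_eq_blocks_general
end

section
/- Let g¹ := {[[A,B],[C,Aᵗ]] : A ∈ M_n(K) arbitrary, B and C ZD} ⊆ aut(Π_{2n}), and define the half-trace htr([[A,B],[C,Aᵗ]]) := tr A. Then htr vanishes on the derived subalgebra [g¹, g¹] (htr is a trace on g¹), and moreover [g¹, g¹] = {X ∈ g¹ : htr(X) = 0}; i.e. the second derived algebra aut⁽²⁾(Π_{2n}) is exactly the traceless (htr = 0) subalgebra of aut⁽¹⁾(Π_{2n}). -/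
open Matrix

/-- The Lie algebra `g¹ = aut⁽¹⁾(Π_{2n})`: block matrices `[[A, B], [C, Aᵀ]]` with `A`
arbitrary and `B`, `C` symmetric with zero diagonal (ZD). -/
def gOneSet (K : Type*) [Field K] (n : ℕ) :
    Set (Matrix (Fin n ⊕ Fin n) (Fin n ⊕ Fin n) K) :=
  {Z | ∃ A B C : Matrix (Fin n) (Fin n) K,
      B.IsSymm ∧ (∀ i, B i i = 0) ∧ C.IsSymm ∧ (∀ i, C i i = 0) ∧
      Z = Matrix.fromBlocks A B C Aᵀ}

/-- The half-trace `htr([[A, B], [C, Aᵀ]]) = tr A`, i.e. the trace of the top-left block. -/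
noncomputable def halfTrace {K : Type*} [Field K] {n : ℕ}
    (X : Matrix (Fin n ⊕ Fin n) (Fin n ⊕ Fin n) K) : K :=
  ∑ i : Fin n, X (Sum.inl i) (Sum.inl i)

/-- The derived subalgebra `[g¹, g¹]`: the `K`-linear span of all commutators of
elements of `g¹`. -/
def derivedGOne (K : Type*) [Field K] (n : ℕ) :
    Submodule K (Matrix (Fin n ⊕ Fin n) (Fin n ⊕ Fin n) K) :=
  Submodule.span K
    {Z | ∃ X ∈ gOneSet K n, ∃ Y ∈ gOneSet K n, Z = X * Y - Y * X}

/-!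
In characteristic 2 a symmetric matrix with zero diagonal is alternating, `B = M - Mᵀ`.
For symmetric `C` this gives `tr (B C) = tr (M C) - tr (Mᵀ C) = 0`, so the top-left block
`A A' + B C' - (A' A + B' C)` of a commutator in `g¹` is traceless; its off-diagonal blocks
have the form `P - Pᵀ`, so the commutator lies in `g¹` again.

Conversely, a traceless `A` is a sum of commutators in `gl n`, and these lift to commutators
of the block-diagonal elements `[[A, 0], [0, Aᵀ]]`. For the alternating `S = E_ij - E_ji` one has
`[E_ii, S] = S` in characteristic 2, so bracketing with `[[E_ii, 0], [0, E_ii]]` produces every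
alternating off-diagonal block.
-/

namespace Matrix

variable {l m o p R : Type*}

theorem fromBlocks_sub [Ring R] (A A' : Matrix l m R) (B B' : Matrix l o R)
    (C C' : Matrix p m R) (D D' : Matrix p o R) :
    fromBlocks A B C D - fromBlocks A' B' C' D' =
      fromBlocks (A - A') (B - B') (C - C') (D - D') := by
  simp only [sub_eq_add_neg, fromBlocks_neg, fromBlocks_add]

theorem neg_eq_self_of_charTwo [Ring R] [CharP R 2] (M : Matrix m o R) : -M = M := by
  ext i j
  exact CharTwo.neg_eq _

theorem isSymm_and_diag_eq_zero_iff [Ring R] [CharP R 2] [LinearOrder m] {B : Matrix m m R} :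
    (B.IsSymm ∧ ∀ i, B i i = 0) ↔ ∃ M : Matrix m m R, B = M - Mᵀ := by
  constructor
  · rintro ⟨hB, hB0⟩
    refine ⟨of fun i j => if i < j then B i j else 0, ?_⟩
    ext i j
    rcases lt_trichotomy i j with h | rfl | h
    · simp [h, h.not_gt]
    · simp [hB0]
    · simp [h, h.not_gt, hB.apply, CharTwo.neg_eq]
  · rintro ⟨M, rfl⟩
    refine ⟨?_, fun i => sub_self _⟩
    rw [IsSymm, transpose_sub, transpose_transpose, ← neg_sub, neg_eq_self_of_charTwo]

theorem trace_sub_transpose_mul_of_isSymm [CommRing R] [Fintype m] (M : Matrix m m R)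
    {C : Matrix m m R} (hC : C.IsSymm) : trace ((M - Mᵀ) * C) = 0 := by
  rw [sub_mul, trace_sub, ← trace_transpose_mul, hC.eq, sub_self]

theorem mem_of_trace_eq_zero [Ring R] [Fintype m] [DecidableEq m]
    {P : Submodule R (Matrix m m R)} (hP : ∀ X Y : Matrix m m R, X * Y - Y * X ∈ P)
    {A : Matrix m m R} (hA : trace A = 0) : A ∈ P := by
  cases isEmpty_or_nonempty m
  · simp [Subsingleton.elim A 0]
  obtain ⟨i₀⟩ := ‹Nonempty m›
  -- for `M = single i j c` this is the commutator of `single i i₀ c` and `single i₀ j 1`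
  suffices ∀ M, M - single i₀ i₀ (trace M) ∈ P by simpa [hA] using this A
  intro M
  induction M using Matrix.induction_on' with
  | h_zero => simp
  | h_add M N hM hN => simpa [trace_add, single_add, add_sub_add_comm] using add_mem hM hN
  | h_std_basis i j c =>
    convert hP (single i i₀ c) (single i₀ j 1) using 1
    by_cases h : i = j
    · subst h; simp [trace_single_eq_same]
    · simp [trace_single_eq_of_ne _ _ _ h, Ne.symm h]

theorem commutator_fromBlocks_diag_offDiag [Ring R] [Fintype m] (D B C : Matrix m m R) :
    fromBlocks D 0 0 Dᵀ * fromBlocks 0 B C 0 - fromBlocks 0 B C 0 * fromBlocks D 0 0 Dᵀ =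
      fromBlocks 0 (D * B - B * Dᵀ) (Dᵀ * C - C * D) 0 := by
  simp [fromBlocks_multiply, fromBlocks_sub]

theorem commutator_single_self_sub_transpose [Ring R] [CharP R 2] [DecidableEq m] [Fintype m]
    (i j : m) (c : R) :
    single i i 1 * (single i j c - (single i j c)ᵀ) - (single i j c - (single i j c)ᵀ) * single i i 1
      = single i j c - (single i j c)ᵀ := by
  rw [transpose_single]
  by_cases h : i = j
  · subst h; simp
  · rw [mul_sub, sub_mul, single_mul_single_same, single_mul_single_of_ne _ _ _ _ h,
      single_mul_single_of_ne _ _ _ _ (Ne.symm h), single_mul_single_same, sub_zero, zero_sub,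
      sub_neg_eq_add, sub_eq_add_neg, neg_eq_self_of_charTwo, one_mul, mul_one]

def fromBlocksDiagTransposeₗ [Semiring R] : Matrix m m R →ₗ[R] Matrix (m ⊕ m) (m ⊕ m) R where
  toFun A := fromBlocks A 0 0 Aᵀ
  map_add' A B := by simp [fromBlocks_add]
  map_smul' c A := by simp [fromBlocks_smul]

end Matrix

section

variable {K : Type*} [Field K] {n : ℕ}

def gOne (K : Type*) [Field K] (n : ℕ) :
    Submodule K (Matrix (Fin n ⊕ Fin n) (Fin n ⊕ Fin n) K) where
  carrier := gOneSet K n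
  zero_mem' := ⟨0, 0, 0, isSymm_zero, fun _ => rfl, isSymm_zero, fun _ => rfl, by simp⟩
  add_mem' := by
    rintro _ _ ⟨A, B, C, hB, hB0, hC, hC0, rfl⟩ ⟨A', B', C', hB', hB0', hC', hC0', rfl⟩
    exact ⟨A + A', B + B', C + C', hB.add hB', by simp [hB0, hB0'], hC.add hC',
      by simp [hC0, hC0'], by simp [fromBlocks_add]⟩
  smul_mem' := by
    rintro c _ ⟨A, B, C, hB, hB0, hC, hC0, rfl⟩
    exact ⟨c • A, c • B, c • C, hB.smul c, by simp [hB0], hC.smul c, by simp [hC0],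
      by simp [fromBlocks_smul]⟩

noncomputable def halfTraceₗ (K : Type*) [Field K] (n : ℕ) :
    Matrix (Fin n ⊕ Fin n) (Fin n ⊕ Fin n) K →ₗ[K] K where
  toFun := halfTrace
  map_add' X Y := by simp [halfTrace, Finset.sum_add_distrib]
  map_smul' c X := by simp [halfTrace, Finset.mul_sum]

theorem halfTrace_fromBlocks (A B C D : Matrix (Fin n) (Fin n) K) :
    halfTrace (fromBlocks A B C D) = trace A := rfl

theorem fromBlocks_diag_mem_gOneSet (A : Matrix (Fin n) (Fin n) K) :
    fromBlocks A 0 0 Aᵀ ∈ gOneSet K n :=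
  ⟨A, 0, 0, isSymm_zero, fun _ => rfl, isSymm_zero, fun _ => rfl, rfl⟩

theorem commutator_mem_derivedGOne {X Y : Matrix (Fin n ⊕ Fin n) (Fin n ⊕ Fin n) K}
    (hX : X ∈ gOneSet K n) (hY : Y ∈ gOneSet K n) : X * Y - Y * X ∈ derivedGOne K n :=
  Submodule.subset_span ⟨X, hX, Y, hY, rfl⟩

variable [CharP K 2]

theorem fromBlocks_sub_transpose_mem_gOneSet (A M N : Matrix (Fin n) (Fin n) K) :
    fromBlocks A (M - Mᵀ) (N - Nᵀ) Aᵀ ∈ gOneSet K n :=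
  ⟨A, _, _, (isSymm_and_diag_eq_zero_iff.2 ⟨M, rfl⟩).1, (isSymm_and_diag_eq_zero_iff.2 ⟨M, rfl⟩).2,
    (isSymm_and_diag_eq_zero_iff.2 ⟨N, rfl⟩).1, (isSymm_and_diag_eq_zero_iff.2 ⟨N, rfl⟩).2, rfl⟩

theorem commutator_mem_gOneSet {X Y : Matrix (Fin n ⊕ Fin n) (Fin n ⊕ Fin n) K}
    (hX : X ∈ gOneSet K n) (hY : Y ∈ gOneSet K n) : X * Y - Y * X ∈ gOneSet K n := by
  obtain ⟨A, B, C, hB, -, hC, -, rfl⟩ := hX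
  obtain ⟨A', B', C', hB', -, hC', -, rfl⟩ := hY
  convert fromBlocks_sub_transpose_mem_gOneSet (A * A' + B * C' - (A' * A + B' * C))
    (A * B' + B * A'ᵀ) (Aᵀ * C' + C * A') using 1
  simp only [fromBlocks_multiply, fromBlocks_sub, transpose_add, transpose_sub, transpose_mul,
    transpose_transpose, hB.eq, hC.eq, hB'.eq, hC'.eq]
  congr 1
  · abel
  · abel
  · rw [← neg_sub, neg_eq_self_of_charTwo]; abel

theorem halfTrace_commutator_eq_zero {X Y : Matrix (Fin n ⊕ Fin n) (Fin n ⊕ Fin n) K}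
    (hX : X ∈ gOneSet K n) (hY : Y ∈ gOneSet K n) : halfTrace (X * Y - Y * X) = 0 := by
  obtain ⟨A, B, C, hB, hB0, hC, -, rfl⟩ := hX
  obtain ⟨A', B', C', hB', hB0', hC', -, rfl⟩ := hY
  obtain ⟨M, rfl⟩ := isSymm_and_diag_eq_zero_iff.1 ⟨hB, hB0⟩
  obtain ⟨M', rfl⟩ := isSymm_and_diag_eq_zero_iff.1 ⟨hB', hB0'⟩
  rw [fromBlocks_multiply, fromBlocks_multiply, fromBlocks_sub, halfTrace_fromBlocks, trace_sub,
    trace_add, trace_add, trace_sub_transpose_mul_of_isSymm _ hC',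
    trace_sub_transpose_mul_of_isSymm _ hC, trace_mul_comm A A', sub_self]

theorem derivedGOne_le : derivedGOne K n ≤ gOne K n ⊓ LinearMap.ker (halfTraceₗ K n) :=
  Submodule.span_le.2 <| by
    rintro _ ⟨X, hX, Y, hY, rfl⟩
    exact ⟨commutator_mem_gOneSet hX hY, halfTrace_commutator_eq_zero hX hY⟩

theorem fromBlocks_diag_mem_derivedGOne {A : Matrix (Fin n) (Fin n) K} (hA : trace A = 0) :
    fromBlocks A 0 0 Aᵀ ∈ derivedGOne K n := by
  refine mem_of_trace_eq_zero (P := (derivedGOne K n).comap fromBlocksDiagTransposeₗ)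
    (fun X Y => ?_) hA
  change fromBlocks (X * Y - Y * X) 0 0 (X * Y - Y * X)ᵀ ∈ derivedGOne K n
  convert commutator_mem_derivedGOne (fromBlocks_diag_mem_gOneSet X) (fromBlocks_diag_mem_gOneSet Y)
    using 1
  rw [transpose_sub, transpose_mul, transpose_mul, ← neg_sub (Xᵀ * Yᵀ), neg_eq_self_of_charTwo]
  simp [fromBlocks_multiply, fromBlocks_sub]

theorem fromBlocks_single_sub_transpose_mem_derivedGOne (i j : Fin n) (b c : K) :
    fromBlocks 0 (single i j b - (single i j b)ᵀ) (single i j c - (single i j c)ᵀ) 0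
      ∈ derivedGOne K n := by
  convert commutator_mem_derivedGOne (fromBlocks_diag_mem_gOneSet (single i i 1))
    (fromBlocks_sub_transpose_mem_gOneSet 0 (single i j b) (single i j c)) using 1
  rw [transpose_zero, commutator_fromBlocks_diag_offDiag, transpose_single i i,
    commutator_single_self_sub_transpose, commutator_single_self_sub_transpose]

theorem fromBlocks_offDiag_mem_derivedGOne (M N : Matrix (Fin n) (Fin n) K) :
    fromBlocks 0 (M - Mᵀ) (N - Nᵀ) 0 ∈ derivedGOne K n := by
  have upper : fromBlocks 0 (M - Mᵀ) 0 0 ∈ derivedGOne K n := by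
    induction M using Matrix.induction_on' with
    | h_zero => simp
    | h_add M M' hM hM' => simpa [fromBlocks_add, add_sub_add_comm] using add_mem hM hM'
    | h_std_basis i j c => simpa using fromBlocks_single_sub_transpose_mem_derivedGOne i j c 0
  have lower : fromBlocks 0 0 (N - Nᵀ) 0 ∈ derivedGOne K n := by
    induction N using Matrix.induction_on' with
    | h_zero => simp
    | h_add N N' hN hN' => simpa [fromBlocks_add, add_sub_add_comm] using add_mem hN hN'
    | h_std_basis i j c => simpa using fromBlocks_single_sub_transpose_mem_derivedGOne i j 0 c
  simpa [fromBlocks_add] using add_mem upper lower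

end

theorem halfTrace_derived_general {K : Type*} [Field K] [CharP K 2] {n : ℕ} :
    (∀ Z ∈ derivedGOne K n, halfTrace Z = 0) ∧
    (derivedGOne K n : Set (Matrix (Fin n ⊕ Fin n) (Fin n ⊕ Fin n) K)) =
      {Z | Z ∈ gOneSet K n ∧ halfTrace Z = 0} := by
  refine ⟨fun Z hZ => (derivedGOne_le hZ).2,
    Set.Subset.antisymm (fun Z hZ => derivedGOne_le hZ) ?_⟩
  rintro _ ⟨⟨A, B, C, hB, hB0, hC, hC0, rfl⟩, hA⟩
  obtain ⟨M, rfl⟩ := isSymm_and_diag_eq_zero_iff.1 ⟨hB, hB0⟩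
  obtain ⟨N, rfl⟩ := isSymm_and_diag_eq_zero_iff.1 ⟨hC, hC0⟩
  have hsplit : fromBlocks A (M - Mᵀ) (N - Nᵀ) Aᵀ =
      fromBlocks A 0 0 Aᵀ + fromBlocks 0 (M - Mᵀ) (N - Nᵀ) 0 := by
    simp [fromBlocks_add]
  rw [SetLike.mem_coe, hsplit]
  exact add_mem (fromBlocks_diag_mem_derivedGOne hA) (fromBlocks_offDiag_mem_derivedGOne M N)

/-- For `p = 2`, the half-trace `htr` vanishes on the derived subalgebra `[g¹, g¹]`
(so `htr` is a trace on `g¹`), and moreover `[g¹, g¹] = {X ∈ g¹ : htr X = 0}`: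
the second derived algebra `aut⁽²⁾(Π_{2n})` is exactly the traceless subalgebra
of `aut⁽¹⁾(Π_{2n})`. -/
theorem halfTrace_derived {K : Type*} [Field K] [CharP K 2] {n : ℕ} (hn : 1 ≤ n) :
    (∀ Z ∈ derivedGOne K n, halfTrace Z = 0) ∧
    (derivedGOne K n : Set (Matrix (Fin n ⊕ Fin n) (Fin n ⊕ Fin n) K)) =
      {Z | Z ∈ gOneSet K n ∧ halfTrace Z = 0} :=
  halfTrace_derived_general
end

section
/- For all f, g ∈ R one has the contact morphism identity [K_f, K_g] = K_{{f,g}}, where the bracket on the left is the commutator of derivations of R. -/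
open MvPolynomial

/-- Index type for the variables `x₀, x₁, …, x_{2k}`: `none` is `x₀`, `Sum.inl i` is `x_i`
(for `1 ≤ i ≤ k`) and `Sum.inr i` is `x_{k+i}`. -/
abbrev ContactIdx (k : ℕ) := Option (Fin k ⊕ Fin k)

/-- The polynomial ring `R = K[x₀, x₁, …, x_{2k}]`. -/
abbrev ContactRing (K : Type*) [Field K] (k : ℕ) := MvPolynomial (ContactIdx k) K

noncomputable section

variable (K : Type*) [Field K] (k : ℕ)

/-- The half Euler operator `E'(f) = Σ_{i=1}^{k} x_i ∂_i f`. -/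
def eulerHalf (f : ContactRing K k) : ContactRing K k :=
  ∑ i : Fin k, X (some (Sum.inl i)) * pderiv (some (Sum.inl i)) f

/-- The contact vector field `K_f`, acting on `R`:
`K_f(h) = (f + E'f)∂₀h + (∂₀f)(Σ x_i ∂_i h) + Σ (∂_{k+i}f ∂_i h + ∂_i f ∂_{k+i} h)`. -/
def contactField (f : ContactRing K k) : ContactRing K k → ContactRing K k := fun h =>
  (f + eulerHalf K k f) * pderiv (none : ContactIdx k) h
    + pderiv (none : ContactIdx k) f *
        (∑ i : Fin k, X (some (Sum.inl i)) * pderiv (some (Sum.inl i)) h)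
    + ∑ i : Fin k,
        (pderiv (some (Sum.inr i)) f * pderiv (some (Sum.inl i)) h
          + pderiv (some (Sum.inl i)) f * pderiv (some (Sum.inr i)) h)

/-- The contact bracket
`{f,g} = (∂₀f)(g + E'g) + (f + E'f)(∂₀g) + Σ (∂_i f ∂_{k+i} g + ∂_{k+i} f ∂_i g)`. -/
def contactBracket (f g : ContactRing K k) : ContactRing K k :=
  pderiv (none : ContactIdx k) f * (g + eulerHalf K k g)
    + (f + eulerHalf K k f) * pderiv (none : ContactIdx k) g
    + ∑ i : Fin k,
        (pderiv (some (Sum.inl i)) f * pderiv (some (Sum.inr i)) g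
          + pderiv (some (Sum.inr i)) f * pderiv (some (Sum.inl i)) g)

end

/-! Both sides are derivations of `R`, so it suffices to compare them on the generators, where
`K_f x₀ = f + E'f`, `K_f x_i = (∂₀f) x_i + ∂_{k+i}f` and `K_f x_{k+i} = ∂_i f`. In characteristic 2
the bracket is symmetric and `K_f h = {f,h} + (∂₀f) h`, so the comparison reduces to how the
bracket interacts with the operators involved: `∂₀` and `∂_{k+i}` obey the Leibniz rule on
`{f,g}`, `∂_i` obeys it up to `∂₀f ∂_i g + ∂_i f ∂₀g` (because `[∂_i, E'] = ∂_i`), and `E'` obeys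
it up to the symplectic part `Σ (∂_{k+i}f ∂_i g + ∂_i f ∂_{k+i}g)` of the bracket. -/

theorem Derivation.finset_sum_apply {R A M ι : Type*} [CommSemiring R] [CommSemiring A]
    [AddCommMonoid M] [Algebra R A] [Module A M] [Module R M] (s : Finset ι)
    (D : ι → Derivation R A M) (a : A) : (∑ i ∈ s, D i) a = ∑ i ∈ s, D i a := by
  induction s using Finset.cons_induction <;> simp [*]

theorem MvPolynomial.pderiv_pderiv_comm {σ R : Type*} [CommRing R] (i j : σ)
    (f : MvPolynomial σ R) : pderiv i (pderiv j f) = pderiv j (pderiv i f) := by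
  have h : ⁅pderiv (R := R) i, pderiv j⁆ = 0 := derivation_ext fun l => by
    rw [Derivation.commutator_apply]
    classical
    simp [pderiv_X, Pi.single_apply, apply_ite]
  rw [← sub_eq_zero, ← Derivation.commutator_apply, h, Derivation.zero_apply]

noncomputable section

variable (K : Type*) [Field K] (k : ℕ)

def eulerHalfDer : Derivation K (ContactRing K k) (ContactRing K k) :=
  ∑ i : Fin k, (X (some (Sum.inl i)) : ContactRing K k) • pderiv (some (Sum.inl i))

def poissonBracket (f g : ContactRing K k) : ContactRing K k :=
  ∑ i : Fin k,
    (pderiv (some (Sum.inr i)) f * pderiv (some (Sum.inl i)) g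
      + pderiv (some (Sum.inl i)) f * pderiv (some (Sum.inr i)) g)

def contactDer (f : ContactRing K k) : Derivation K (ContactRing K k) (ContactRing K k) :=
  (f + eulerHalf K k f) • pderiv none + pderiv none f • eulerHalfDer K k
    + ∑ i : Fin k,
        (pderiv (some (Sum.inr i)) f • pderiv (some (Sum.inl i))
          + pderiv (some (Sum.inl i)) f • pderiv (some (Sum.inr i)))

end

section
variable {K : Type*} [Field K] {k : ℕ}

theorem eulerHalfDer_apply (f : ContactRing K k) : eulerHalfDer K k f = eulerHalf K k f := by
  simp [eulerHalfDer, eulerHalf, Derivation.finset_sum_apply]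

theorem contactField_eq (f h : ContactRing K k) :
    contactField K k f h = (f + eulerHalf K k f) * pderiv none h
      + pderiv none f * eulerHalf K k h + poissonBracket K k f h := rfl

theorem contactDer_apply (f h : ContactRing K k) :
    contactDer K k f h = contactField K k f h := by
  simp [contactDer, contactField_eq, poissonBracket, eulerHalfDer_apply,
    Derivation.finset_sum_apply]

theorem contactBracket_eq (f g : ContactRing K k) :
    contactBracket K k f g = pderiv none f * (g + eulerHalf K k g)
      + (f + eulerHalf K k f) * pderiv none g + poissonBracket K k f g := by
  simp only [contactBracket, poissonBracket, add_comm (pderiv (some (Sum.inl _)) f * _)]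

theorem poissonBracket_comm (f g : ContactRing K k) :
    poissonBracket K k f g = poissonBracket K k g f := by
  simp only [poissonBracket, mul_comm (pderiv _ f), add_comm (pderiv (some (Sum.inl _)) g * _)]

theorem contactBracket_comm (f g : ContactRing K k) :
    contactBracket K k f g = contactBracket K k g f := by
  rw [contactBracket_eq, contactBracket_eq, poissonBracket_comm]
  ring

theorem contactBracket_eq_contactField_add (f h : ContactRing K k) :
    contactBracket K k f h = contactField K k f h + pderiv none f * h := by
  rw [contactBracket_eq, contactField_eq]
  ring

theorem pderiv_eulerHalf_of_ne {j : ContactIdx k} (hj : ∀ i, j ≠ some (Sum.inl i))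
    (h : ContactRing K k) :
    pderiv j (eulerHalf K k h) = eulerHalf K k (pderiv j h) := by
  simp [eulerHalf, pderiv_X, (hj _).symm, pderiv_pderiv_comm j]

theorem pderiv_inl_eulerHalf (a : Fin k) (h : ContactRing K k) :
    pderiv (some (Sum.inl a)) (eulerHalf K k h)
      = pderiv (some (Sum.inl a)) h + eulerHalf K k (pderiv (some (Sum.inl a)) h) := by
  simp [eulerHalf, pderiv_X, Pi.single_apply, Finset.sum_add_distrib,
    pderiv_pderiv_comm (some (Sum.inl a)), add_comm]

theorem pderiv_poissonBracket (j : ContactIdx k) (f g : ContactRing K k) :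
    pderiv j (poissonBracket K k f g)
      = poissonBracket K k (pderiv j f) g + poissonBracket K k f (pderiv j g) := by
  simp only [poissonBracket, map_sum, Derivation.leibniz, smul_eq_mul, map_add,
    ← Finset.sum_add_distrib, pderiv_pderiv_comm j]
  exact Finset.sum_congr rfl fun _ _ => by ring

theorem eulerHalf_poissonBracket (f g : ContactRing K k) :
    eulerHalf K k (poissonBracket K k f g) = poissonBracket K k (eulerHalf K k f) g
      + poissonBracket K k f (eulerHalf K k g) - poissonBracket K k f g := by
  have hr : ∀ i (u : ContactRing K k), eulerHalf K k (pderiv (some (Sum.inr i)) u)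
      = pderiv (some (Sum.inr i)) (eulerHalf K k u) := fun i u =>
    (pderiv_eulerHalf_of_ne (by simp) u).symm
  have hl : ∀ i (u : ContactRing K k), eulerHalf K k (pderiv (some (Sum.inl i)) u)
      = pderiv (some (Sum.inl i)) (eulerHalf K k u) - pderiv (some (Sum.inl i)) u :=
    fun i u => by rw [pderiv_inl_eulerHalf]; ring
  simp only [poissonBracket, ← eulerHalfDer_apply, map_sum, map_add, Derivation.leibniz,
    smul_eq_mul]
  simp only [eulerHalfDer_apply, hr, hl, ← Finset.sum_add_distrib, ← Finset.sum_sub_distrib]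
  exact Finset.sum_congr rfl fun _ _ => by ring

theorem pderiv_contactBracket_of_ne {j : ContactIdx k} (hj : ∀ i, j ≠ some (Sum.inl i))
    (f g : ContactRing K k) :
    pderiv j (contactBracket K k f g)
      = contactBracket K k (pderiv j f) g + contactBracket K k f (pderiv j g) := by
  simp only [contactBracket_eq, map_add, pderiv_mul, pderiv_eulerHalf_of_ne hj,
    pderiv_poissonBracket, pderiv_pderiv_comm j none]
  ring

theorem pderiv_inl_contactBracket (a : Fin k) (f g : ContactRing K k) :
    pderiv (some (Sum.inl a)) (contactBracket K k f g)
      = contactBracket K k (pderiv (some (Sum.inl a)) f) g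
        + contactBracket K k f (pderiv (some (Sum.inl a)) g)
        + pderiv none f * pderiv (some (Sum.inl a)) g
        + pderiv (some (Sum.inl a)) f * pderiv none g := by
  simp only [contactBracket_eq, map_add, pderiv_mul, pderiv_inl_eulerHalf,
    pderiv_poissonBracket, pderiv_pderiv_comm (some (Sum.inl a)) none]
  ring

theorem eulerHalf_contactBracket (f g : ContactRing K k) :
    eulerHalf K k (contactBracket K k f g)
      = contactBracket K k (eulerHalf K k f) g + contactBracket K k f (eulerHalf K k g)
        - poissonBracket K k f g := by
  have hE : ∀ u : ContactRing K k,
      eulerHalf K k (pderiv none u) = pderiv none (eulerHalf K k u) := fun u => (pderiv_eulerHalf_of_ne (by simp) u).symm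
  simp only [contactBracket_eq, ← eulerHalfDer_apply, map_add, Derivation.leibniz, smul_eq_mul]
  simp only [eulerHalfDer_apply, hE, eulerHalf_poissonBracket]
  ring

theorem contactDer_X_none (f : ContactRing K k) :
    contactDer K k f (X none) = f + eulerHalf K k f := by
  simp [contactDer_apply, contactField_eq, poissonBracket, eulerHalf, pderiv_X]

theorem contactDer_X_inl (f : ContactRing K k) (a : Fin k) :
    contactDer K k f (X (some (Sum.inl a)))
      = pderiv none f * X (some (Sum.inl a)) + pderiv (some (Sum.inr a)) f := by
  simp [contactDer_apply, contactField_eq, poissonBracket, eulerHalf, pderiv_X, Pi.single_apply]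

theorem contactDer_X_inr (f : ContactRing K k) (a : Fin k) :
    contactDer K k f (X (some (Sum.inr a))) = pderiv (some (Sum.inl a)) f := by
  simp [contactDer_apply, contactField_eq, poissonBracket, eulerHalf, pderiv_X, Pi.single_apply]

end

section
variable {K : Type*} [Field K] [CharP K 2] {k : ℕ}

theorem contactDer_apply_eq_contactBracket_add (u v : ContactRing K k) :
    contactDer K k u v = contactBracket K k u v + pderiv none u * v := by
  rw [contactBracket_eq_contactField_add, contactDer_apply, add_assoc, CharTwo.add_self_eq_zero,
    add_zero]

theorem contactDer_commutator (f g : ContactRing K k) :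
    ⁅contactDer K k f, contactDer K k g⁆ = contactDer K k (contactBracket K k f g) := by
  refine derivation_ext ?_
  rintro (_ | a | a) <;> rw [Derivation.commutator_apply, CharTwo.sub_eq_add]
  · simp only [contactDer_X_none, map_add, eulerHalf_contactBracket]
    simp only [contactDer_apply_eq_contactBracket_add, contactBracket_comm g, contactBracket_eq f g]
    rw [← sub_eq_zero]; ring_nf; simp [CharTwo.ofNat_eq_mod]
  · have h₀ := pderiv_contactBracket_of_ne (j := none) (by simp) f g
    have hr := pderiv_contactBracket_of_ne (j := some (Sum.inr a)) (by simp) f g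
    simp only [contactDer_X_inl, map_add, Derivation.leibniz, smul_eq_mul, h₀, hr]
    simp only [contactDer_apply_eq_contactBracket_add, contactBracket_comm g]
    rw [← sub_eq_zero]; ring_nf; simp [CharTwo.ofNat_eq_mod]
  · simp only [contactDer_X_inr, pderiv_inl_contactBracket]
    simp only [contactDer_apply_eq_contactBracket_add, contactBracket_comm g]
    ring

end

theorem contactField_commutator_general {K : Type*} [Field K] [CharP K 2] {k : ℕ}
    (f g : ContactRing K k) :
    ∀ h : ContactRing K k,
      contactField K k f (contactField K k g h) - contactField K k g (contactField K k f h)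
        = contactField K k (contactBracket K k f g) h := by
  intro h
  simpa only [Derivation.commutator_apply, contactDer_apply] using
    congr($(contactDer_commutator f g) h)

/-- For `p = 2`, the contact morphism identity `[K_f, K_g] = K_{{f,g}}` holds, where the
bracket on the left is the commutator of derivations of `R`. -/
theorem contactField_commutator {K : Type*} [Field K] [CharP K 2] {k : ℕ} (hk : 1 ≤ k)
    (f g : ContactRing K k) :
    ∀ h : ContactRing K k,
      contactField K k f (contactField K k g h) - contactField K k g (contactField K k f h)
        = contactField K k (contactBracket K k f g) h :=
  contactField_commutator_general f g
end

section
/- The derivation D_n := (x₁·x₂·⋯·x_{n−1})·∂_n belongs to S (it is divergence-free), but D_n does not belong to the derived subalgebra [S, S], i.e. D_n is not a K-linear combination of commutators of elements of S. (Hence svect(n; N_s) in characteristic 2 is not equal to its derived algebra.) -/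
open MvPolynomial

/-- The polynomial ring `K[x₁, …, xₙ]`, whose quotient by the squares of the variables is
the algebra `A = O(n; N_s)` of truncated polynomials in characteristic 2. -/
abbrev SR (K : Type*) [Field K] (n : ℕ) := MvPolynomial (Fin n) K

noncomputable section

variable (K : Type*) [Field K] (n : ℕ)

/-- The ideal `(x₁², …, xₙ²)`, so that `A = K[x₁,…,xₙ] ⧸ sqIdeal` is the truncated
polynomial algebra; working modulo this ideal encodes working in `A` (the partial
derivatives descend to `A` since `∂_i(x_i²) = 2x_i = 0` in characteristic 2). -/
def sqIdeal : Ideal (SR K n) :=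
  Ideal.span (Set.range fun i : Fin n => (X i : SR K n) ^ 2)

/-- The coefficients of the commutator `[Σ f_i ∂_i, Σ g_i ∂_i]` of vector fields. -/
def vfBr (f g : Fin n → SR K n) : Fin n → SR K n := fun m =>
  ∑ i : Fin n, (f i * pderiv i (g m) - g i * pderiv i (f m))

/-- A vector field `Σ f_i ∂_i` is divergence-free on `A` iff `Σ ∂_i f_i = 0` in `A`,
i.e. `Σ ∂_i f_i ∈ sqIdeal`; these fields form `S = svect(n; N_s)`. -/
def IsDivFree (f : Fin n → SR K n) : Prop :=
  (∑ i : Fin n, pderiv i (f i)) ∈ sqIdeal K n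

end

/-- The distinguished vector field `D_n = (x₁⋯x_{n−1})·∂_n`. -/
noncomputable def Dlast (K : Type*) [Field K] (n : ℕ) (hn : 2 ≤ n) :
    Fin n → SR K n := fun m =>
  if m = (⟨n - 1, by omega⟩ : Fin n) then
    ∏ i ∈ Finset.univ.erase (⟨n - 1, by omega⟩ : Fin n), X i
  else 0


/-!
Consider the linear functional on vector fields that takes the coefficient of the squarefree
monomial `x^μ = x₁⋯x_{n−1}` in the `∂_n`-component. It vanishes on fields with components in
`(x₁², …, xₙ²)`, and it vanishes on every bracket `[f, g]` of divergence-free fields: writing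
`[f, g]_n = Σ_i ∂_i(f_i g_n − f_n g_i) − (div f) g_n + (div g) f_n`, the terms with `div` lie in
the ideal, the `i = n` term is zero, and for `i ≠ n` the coefficient of `x^μ` in `∂_i h` is
`(μ_i + 1) = 2 = 0` times a coefficient of `h`. On `D_n` the functional takes the value `1`.
-/

open Finset

lemma coeff_pderiv_eq_zero_of_apply_eq_one {σ R : Type*} [CommRing R] [CharP R 2]
    {μ : σ →₀ ℕ} {i : σ} (h : μ i = 1) (p : MvPolynomial σ R) :
    coeff μ (pderiv i p) = 0 := by
  rw [coeff_pderiv, h, Nat.cast_one, one_add_one_eq_two, CharTwo.two_eq_zero, mul_zero]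

lemma Finsupp.sum_single_one_apply {α : Type*} [DecidableEq α] (s : Finset α) (j : α) :
    (∑ i ∈ s, Finsupp.single i 1 : α →₀ ℕ) j = if j ∈ s then 1 else 0 := by
  simp [Finsupp.finsetSum_apply, Finsupp.single_apply]

section

variable {K : Type*} [Field K] {n : ℕ}

lemma sqIdeal_eq_span_monomial :
    sqIdeal K n =
      Ideal.span ((fun s => monomial s (1 : K)) '' Set.range fun i => Finsupp.single i 2) := by
  rw [sqIdeal, ← Set.range_comp]
  simp only [Function.comp_def, X_pow_eq_monomial]

lemma coeff_eq_zero_of_mem_sqIdeal {p : SR K n} (hp : p ∈ sqIdeal K n)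
    {μ : Fin n →₀ ℕ} (hμ : ∀ i, μ i ≤ 1) : coeff μ p = 0 := by
  rw [sqIdeal_eq_span_monomial, mem_ideal_span_monomial_image] at hp
  by_contra h
  obtain ⟨_, ⟨i, rfl⟩, hle⟩ := hp μ (MvPolynomial.mem_support_iff.mpr h)
  have := hle i
  have := hμ i
  simp only [Finsupp.single_eq_same] at *
  omega

variable (K n) in
noncomputable def divergence (f : Fin n → SR K n) : SR K n := ∑ i, pderiv i (f i)

lemma isDivFree_iff {f : Fin n → SR K n} : IsDivFree K n f ↔ divergence K n f ∈ sqIdeal K n :=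
  Iff.rfl

lemma vfBr_eq (f g : Fin n → SR K n) (m : Fin n) :
    vfBr K n f g m = ∑ i, pderiv i (f i * g m - f m * g i)
      - divergence K n f * g m + divergence K n g * f m := by
  rw [vfBr, divergence, divergence, Finset.sum_mul, Finset.sum_mul, ← sum_sub_distrib,
    ← sum_add_distrib]
  refine sum_congr rfl fun i _ => ?_
  rw [map_sub, pderiv_mul, pderiv_mul]
  ring

lemma coeff_vfBr_eq_zero [CharP K 2] {f g : Fin n → SR K n}
    (hf : IsDivFree K n f) (hg : IsDivFree K n g) {μ : Fin n →₀ ℕ} {ℓ : Fin n}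
    (hμ : ∀ i, μ i ≤ 1) (hμℓ : ∀ i ≠ ℓ, μ i = 1) :
    coeff μ (vfBr K n f g ℓ) = 0 := by
  have hexact : coeff μ (∑ i, pderiv i (f i * g ℓ - f ℓ * g i)) = 0 := by
    rw [coeff_sum]
    refine sum_eq_zero fun i _ => ?_
    rcases eq_or_ne i ℓ with rfl | hi
    · rw [sub_self, map_zero, coeff_zero]
    · exact coeff_pderiv_eq_zero_of_apply_eq_one (hμℓ i hi) _
  rw [vfBr_eq, coeff_add, coeff_sub, hexact,
    coeff_eq_zero_of_mem_sqIdeal (Ideal.mul_mem_right _ _ (isDivFree_iff.mp hf)) hμ,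
    coeff_eq_zero_of_mem_sqIdeal (Ideal.mul_mem_right _ _ (isDivFree_iff.mp hg)) hμ,
    sub_zero, add_zero]

lemma Dlast_apply_last (hn : 2 ≤ n) :
    Dlast K n hn ⟨n - 1, by omega⟩ =
      monomial (∑ i ∈ univ.erase ⟨n - 1, by omega⟩, Finsupp.single i 1) 1 := by
  rw [Dlast, if_pos rfl, monomial_sum_one]
  rfl

lemma isDivFree_Dlast (hn : 2 ≤ n) : IsDivFree K n (Dlast K n hn) := by
  have : divergence K n (Dlast K n hn) = 0 := by
    rw [divergence, Finset.sum_eq_single (⟨n - 1, by omega⟩ : Fin n), Dlast_apply_last,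
      pderiv_monomial]
    · simp [Finsupp.sum_single_one_apply]
    · intro i _ hi
      rw [Dlast, if_neg hi, map_zero]
    · simp
  rw [isDivFree_iff, this]
  exact (sqIdeal K n).zero_mem

end

/-- For `p = 2`, the field `D_n = (x₁⋯x_{n−1})∂_n` is divergence-free but does not lie in
the derived subalgebra `[S, S]` of `S = svect(n; N_s)`: in the truncated polynomial algebra
`A` (i.e. modulo `sqIdeal`, componentwise), `D_n` is not a `K`-linear combination of
commutators of divergence-free vector fields.  Hence `svect(n; N_s)` is not equal to its
derived algebra. -/
theorem Dlast_not_in_derived {K : Type*} [Field K] [CharP K 2] (n : ℕ) (hn : 2 ≤ n) :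
    IsDivFree K n (Dlast K n hn) ∧
    ¬ ∃ (m : ℕ) (c : Fin m → K) (f g : Fin m → Fin n → SR K n),
        (∀ t, IsDivFree K n (f t) ∧ IsDivFree K n (g t)) ∧
        (∀ j : Fin n,
          Dlast K n hn j - (∑ t, c t • vfBr K n (f t) (g t) j) ∈ sqIdeal K n) := by
  refine ⟨isDivFree_Dlast hn, ?_⟩
  rintro ⟨m, c, f, g, hdiv, hmem⟩
  have hD := Dlast_apply_last (K := K) hn
  set ℓ : Fin n := ⟨n - 1, by omega⟩
  set μ : Fin n →₀ ℕ := ∑ i ∈ univ.erase ℓ, Finsupp.single i 1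
  have hμ : ∀ i, μ i ≤ 1 := fun i => by
    rw [Finsupp.sum_single_one_apply]; split_ifs <;> omega
  have hμℓ : ∀ i ≠ ℓ, μ i = 1 := fun i hi => by simp [μ, Finsupp.sum_single_one_apply, hi]
  have hcoeff := coeff_eq_zero_of_mem_sqIdeal (hmem ℓ) hμ
  simp only [coeff_sub, coeff_sum, coeff_smul, hD, coeff_monomial, if_pos,
    coeff_vfBr_eq_zero (hdiv _).1 (hdiv _).2 hμ hμℓ, smul_zero, sum_const_zero, sub_zero] at hcoeff
  exact one_ne_zero hcoeff
end
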